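/- Let A be a commutative ring and I an ideal of the polynomial ring A[X]. For a prime ideal p of A with residue field κ(p) = FractionRing(A ⧸ p), the fiber ring over p is κ(p)[X] ⧸ I·κ(p)[X], where I·κ(p)[X] is the ideal generated by the images of elements of I under coefficientwise reduction A[X] → κ(p)[X]. Then: (1) the set W = {p ∈ Spec A : the image of I in κ(p)[X] is the zero ideal} is Zariski-closed in Spec A, and W equals the set of primes p for which the fiber ring κ(p)[X] ⧸ I·κ(p)[X] has Krull dimension 1 (equivalently, p ∈ W iff every coefficient of every element of I lies in p); (2) if moreover A is an integral domain and the generic fiber FractionRing(A)[X] ⧸ I·FractionRing(A)[X] is infinite-dimensional as a FractionRing(A)-vector space, then I = 0. -/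

import Mathlib

/-
Over a field `F`, every nonzero ideal of `F[X]` is generated by a nonzerodivisor `g`, so
`F[X] ⧸ J` is finite-dimensional over `F` and has Krull dimension `≤ dim F[X] - 1 = 0`; hence
the fiber `κ(p)[X] ⧸ I·κ(p)[X]` has dimension `1` exactly when `I·κ(p)[X] = 0`.  The kernel of
`A[X] → κ(p)[X]` is `p·A[X]`, so this happens iff `p` contains all coefficients of elements of
`I`, which is a Zariski-closed condition.  Over a domain, `A[X] → Frac(A)[X]` is injective, so
`I ≠ 0` would give a nonzero ideal of `Frac(A)[X]` and a finite-dimensional generic fiber.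
-/

open Polynomial

/-- Coefficientwise reduction `A[X] → κ(p)[X]` at a prime `p` of `A`, where
`κ(p) = Frac(A ⧸ p)` is the residue field at `p`. -/
noncomputable def residueFiberMap {A : Type*} [CommRing A] (p : PrimeSpectrum A) :
    Polynomial A →+* Polynomial (FractionRing (A ⧸ p.asIdeal)) :=
  Polynomial.mapRingHom
    ((algebraMap (A ⧸ p.asIdeal) (FractionRing (A ⧸ p.asIdeal))).comp
      (Ideal.Quotient.mk p.asIdeal))

theorem Ideal.exists_ne_zero_eq_span_singleton_of_ne_bot {R : Type*} [Semiring R]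
    [IsPrincipalIdealRing R] {J : Ideal R} (hJ : J ≠ ⊥) :
    ∃ g : R, g ≠ 0 ∧ J = Ideal.span {g} := by
  obtain ⟨g, rfl⟩ := (IsPrincipalIdealRing.principal J).principal
  exact ⟨g, by simpa using hJ, rfl⟩

namespace Polynomial

variable {F : Type*} [Field F]

theorem finite_quotient_of_ne_bot {J : Ideal F[X]} (hJ : J ≠ ⊥) :
    Module.Finite F (F[X] ⧸ J) := by
  obtain ⟨g, hg, rfl⟩ := Ideal.exists_ne_zero_eq_span_singleton_of_ne_bot hJ
  exact (AdjoinRoot.powerBasis hg).finite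

theorem ringKrullDim_quotient_eq_one_iff {J : Ideal F[X]} :
    ringKrullDim (F[X] ⧸ J) = 1 ↔ J = ⊥ := by
  have hdim : ringKrullDim F[X] = 1 := by
    rw [ringKrullDim_of_isNoetherianRing, ringKrullDim_eq_zero_of_field, zero_add]
  refine ⟨fun h => ?_, fun h => ?_⟩
  · by_contra hJ
    obtain ⟨g, hg, rfl⟩ := Ideal.exists_ne_zero_eq_span_singleton_of_ne_bot hJ
    have hle := ringKrullDim_quotient_succ_le_of_nonZeroDivisor (mem_nonZeroDivisors_of_ne_zero hg)
    rw [h, hdim] at hle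
    exact absurd hle (by decide)
  · rw [h, ringKrullDim_eq_of_ringEquiv (RingEquiv.quotientBot F[X]), hdim]

end Polynomial

section ResidueFiber

variable {A : Type*} [CommRing A]

theorem ker_residueFiberMap (p : PrimeSpectrum A) :
    RingHom.ker (residueFiberMap p) = p.asIdeal.map C := by
  rw [residueFiberMap, ker_mapRingHom,
    RingHom.ker_comp_of_injective _ (IsFractionRing.injective _ _), Ideal.mk_ker]

theorem residueFiberMap_eq_zero_iff (p : PrimeSpectrum A) {f : A[X]} :
    residueFiberMap p f = 0 ↔ ∀ n, f.coeff n ∈ p.asIdeal := by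
  rw [← RingHom.mem_ker, ker_residueFiberMap, Ideal.mem_map_C_iff]

theorem setOf_forall_residueFiberMap_eq_zero (I : Ideal A[X]) :
    {p : PrimeSpectrum A | ∀ f ∈ I, residueFiberMap p f = 0} =
      PrimeSpectrum.zeroLocus (⋃ f ∈ I, Set.range f.coeff) := by
  ext p
  simp only [Set.mem_ofPred_eq, PrimeSpectrum.mem_zeroLocus, Set.iUnion_subset_iff,
    Set.range_subset_iff, SetLike.mem_coe, residueFiberMap_eq_zero_iff]

theorem isClosed_setOf_forall_residueFiberMap_eq_zero (I : Ideal A[X]) :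
    IsClosed {p : PrimeSpectrum A | ∀ f ∈ I, residueFiberMap p f = 0} :=
  setOf_forall_residueFiberMap_eq_zero I ▸ PrimeSpectrum.isClosed_zeroLocus _

end ResidueFiber

/-- **Projections of relative dimension 1: the locus of 1-dimensional fibers is closed.**
Let `A` be a commutative ring and `I` an ideal of `A[X]`.  Then
(1) the set `W` of primes `p` of `A` where the image of `I` in `κ(p)[X]` is zero is
Zariski-closed, `W` equals the set of primes where the fiber ring `κ(p)[X] ⧸ I·κ(p)[X]` has
Krull dimension 1, and `p ∈ W` iff every coefficient of every element of `I` lies in `p`;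
(2) if `A` is a domain and the generic fiber
`Frac(A)[X] ⧸ I·Frac(A)[X]` is infinite-dimensional over `Frac(A)`, then `I = 0`. -/
theorem isClosed_dimOneFiberLocus_and_generically_infinite_imp_zero
    (A : Type*) [CommRing A] (I : Ideal (Polynomial A)) :
    IsClosed {p : PrimeSpectrum A | ∀ f ∈ I, residueFiberMap p f = 0} ∧
    (∀ p : PrimeSpectrum A,
      (∀ f ∈ I, residueFiberMap p f = 0) ↔
        ringKrullDim (Polynomial (FractionRing (A ⧸ p.asIdeal)) ⧸
          Ideal.map (residueFiberMap p) I) = 1) ∧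
    (∀ p : PrimeSpectrum A,
      (∀ f ∈ I, residueFiberMap p f = 0) ↔
        ∀ f ∈ I, ∀ n : ℕ, f.coeff n ∈ p.asIdeal) ∧
    (∀ [IsDomain A],
      ¬ Module.Finite (FractionRing A)
          (Polynomial (FractionRing A) ⧸
            Ideal.map (Polynomial.mapRingHom (algebraMap A (FractionRing A))) I) →
        I = ⊥) := by
  refine ⟨isClosed_setOf_forall_residueFiberMap_eq_zero I, fun p => ?_,
    fun p => forall₂_congr fun f _ => residueFiberMap_eq_zero_iff p, fun hfin => ?_⟩
  · rw [ringKrullDim_quotient_eq_one_iff, Ideal.map_eq_bot_iff_le_ker, SetLike.le_def]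
    simp only [RingHom.mem_ker]
  · have hinj := map_injective _ (IsFractionRing.injective A (FractionRing A))
    by_contra hI
    exact hfin (finite_quotient_of_ne_bot ((Ideal.map_eq_bot_iff_of_injective hinj).not.mpr hI))
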